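/- Let R be a TRS over a signature Σ that contains a collapsing rule, i.e., a rule ℓ → x whose right-hand side is a variable x ∈ X (so ℓ ∉ X and x ∈ Var(ℓ)). Then infinitary equational reasoning relates all terms: s =∞ t for all s, t ∈ T. -/

import Mathlib

open Relation

/-- A signature: a type of function symbols together with an arity for each symbol. -/
structure Signature where
  Sym : Type
  ar : Sym → ℕ

/-- The polynomial functor whose final coalgebra is the set of (finite and infinite)
terms over the signature `Sg` and the set `X` of variables. -/
def TermF (Sg : Signature) (X : Type) : PFunctor.{0} :=
  ⟨X ⊕ Sg.Sym, fun a => Sum.rec (fun _ => Empty) (fun f => Fin (Sg.ar f)) a⟩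

/-- The set `T` of finite and infinite terms over `Sg` and `X`, defined coinductively
(as the final coalgebra, i.e. the M-type, of `TermF Sg X`). -/
def Tm (Sg : Signature) (X : Type) : Type := PFunctor.M (TermF Sg X)

variable {Sg : Signature} {X : Type}

/-- The term consisting of a single variable. -/
def Tm.var (x : X) : Tm Sg X := PFunctor.M.mk ⟨Sum.inl x, Empty.elim⟩

/-- The term `f(t₁,…,tₙ)` with root symbol `f` and arguments `args`. -/
def Tm.node (f : Sg.Sym) (args : Fin (Sg.ar f) → Tm Sg X) : Tm Sg X :=
  PFunctor.M.mk ⟨Sum.inr f, args⟩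

/-- One step of the corecursive definition of substitution:
`Sum.inl t` means `t` still has to be substituted, `Sum.inr t` means `t` is copied. -/
def substAux (σ : X → Tm Sg X) :
    (Tm Sg X ⊕ Tm Sg X) → (TermF Sg X) (Tm Sg X ⊕ Tm Sg X) := fun s =>
  match s with
  | Sum.inl t =>
    match PFunctor.M.dest t with
    | ⟨Sum.inl x, _⟩ =>
        ⟨(PFunctor.M.dest (σ x)).1, fun b => Sum.inr ((PFunctor.M.dest (σ x)).2 b)⟩
    | ⟨Sum.inr f, k⟩ => ⟨Sum.inr f, fun b => Sum.inl (k b)⟩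
  | Sum.inr t =>
      ⟨(PFunctor.M.dest t).1, fun b => Sum.inr ((PFunctor.M.dest t).2 b)⟩

/-- Application `tσ` of a substitution `σ : X → T` to a term `t`, defined corecursively. -/
def subst (σ : X → Tm Sg X) (t : Tm Sg X) : Tm Sg X :=
  PFunctor.M.corec (substAux σ) (Sum.inl t)

/-- `Occurs x t`: the variable `x` occurs in the term `t`. -/
inductive Occurs (x : X) : Tm Sg X → Prop
  | here {t : Tm Sg X} : t = Tm.var x → Occurs x t
  | deeper {t : Tm Sg X} {f : Sg.Sym} {args : Fin (Sg.ar f) → Tm Sg X}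
      (i : Fin (Sg.ar f)) : t = Tm.node f args → Occurs x (args i) → Occurs x t

/-- A term rewriting system over `Sg` and `X`: a set of rules `ℓ → r` such that
`ℓ` is not a variable and all variables of `r` occur in `ℓ`. -/
structure TRS (Sg : Signature) (X : Type) where
  rules : Set (Tm Sg X × Tm Sg X)
  lhs_not_var : ∀ l r, (l, r) ∈ rules → ∀ x : X, l ≠ Tm.var x
  vars_lhs : ∀ l r, (l, r) ∈ rules → ∀ x : X, Occurs x r → Occurs x l

/-- Relations on terms. -/
abbrev TRel (Sg : Signature) (X : Type) := Tm Sg X → Tm Sg X → Prop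

/-- The root step relation `→ε := {(ℓσ, rσ) | ℓ → r ∈ R, σ a substitution}`. -/
def RootStep (R : TRS Sg X) : TRel Sg X := fun s t =>
  ∃ l r, (l, r) ∈ R.rules ∧ ∃ σ : X → Tm Sg X, s = subst σ l ∧ t = subst σ r

/-- `StepAt Q p s t`: a `Q`-step at position `p`, i.e. `s = C[u]`, `t = C[v]` with
`(u,v) ∈ Q` and `C` a one-hole context whose hole is at position `p`. -/
inductive StepAt (Q : TRel Sg X) : List ℕ → Tm Sg X → Tm Sg X → Prop
  | here {s t : Tm Sg X} : Q s t → StepAt Q [] s t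
  | deeper {f : Sg.Sym} {ss ts : Fin (Sg.ar f) → Tm Sg X} (i : Fin (Sg.ar f))
      {p : List ℕ} : StepAt Q p (ss i) (ts i) → (∀ j, j ≠ i → ss j = ts j) →
      StepAt Q ((i : ℕ) :: p) (Tm.node f ss) (Tm.node f ts)

/-- The one-step rewrite relation `→` of a TRS: a root step applied inside a
one-hole context. -/
def Step (R : TRS Sg X) : TRel Sg X := fun s t => ∃ p, StepAt (RootStep R) p s t

/-- The lifting `↓R` of a relation `R`:
`↓R := {(f(s₁,…,sₙ), f(t₁,…,tₙ)) | f ∈ Σ, s₁ R t₁, …, sₙ R tₙ} ∪ Id`. -/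
def liftRel (R : TRel Sg X) : TRel Sg X := fun s t =>
  s = t ∨ ∃ (f : Sg.Sym) (ss ts : Fin (Sg.ar f) → Tm Sg X),
    s = Tm.node f ss ∧ t = Tm.node f ts ∧ ∀ i, R (ss i) (ts i)

lemma liftRel_mono : Monotone (liftRel (Sg := Sg) (X := X)) := by
  intro R S h s t hst
  rcases hst with h1 | ⟨f, ss, ts, rfl, rfl, hi⟩
  · exact Or.inl h1
  · exact Or.inr ⟨f, ss, ts, rfl, rfl, fun i => h _ _ (hi i)⟩

/-- Relational composition `r ∘ s`. -/
def relComp (r s : TRel Sg X) : TRel Sg X := fun a c => ∃ b, r a b ∧ s b c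

/-- The monotone operator `S ↦ (→ε ∪ ↓R)* ∘ ↓S` (for a fixed `R`). -/
def iredInnerHom (R : TRS Sg X) (U : TRel Sg X) : TRel Sg X →o TRel Sg X where
  toFun S := relComp
    (ReflTransGen (fun s t => RootStep R s t ∨ liftRel U s t)) (liftRel S)
  monotone' := by
    intro S S' h a c hac
    rcases hac with ⟨b, h1, h2⟩
    exact ⟨b, h1, liftRel_mono h _ _ h2⟩

/-- The monotone operator `R ↦ νS.((→ε ∪ ↓R)* ∘ ↓S)`. -/
def iredHom (R : TRS Sg X) : TRel Sg X →o TRel Sg X where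
  toFun U := OrderHom.gfp (iredInnerHom R U)
  monotone' := by
    intro U V h
    apply OrderHom.gfp.monotone
    intro S a c hac
    rcases hac with ⟨b, h1, h2⟩
    refine ⟨b, ?_, h2⟩
    exact ReflTransGen.mono (fun x y hxy => hxy.imp id (fun h' => liftRel_mono h _ _ h')) _ _ h1

/-- The infinitary rewrite relation `→∞ := μR.νS.((→ε ∪ ↓R)* ∘ ↓S)`. -/
def ired (R : TRS Sg X) : TRel Sg X := OrderHom.lfp (iredHom R)

/-- The monotone operator `R' ↦ (→ε ∪ ↓R')*`. -/
def biHom (R : TRS Sg X) : TRel Sg X →o TRel Sg X where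
  toFun U := ReflTransGen (fun s t => RootStep R s t ∨ liftRel U s t)
  monotone' := by
    intro U V h a b hab
    exact ReflTransGen.mono (fun x y hxy => hxy.imp id (fun h' => liftRel_mono h _ _ h')) _ _ hab

/-- The bi-infinite rewrite relation `∞→ := νR.(→ε ∪ ↓R)*`. -/
def bired (R : TRS Sg X) : TRel Sg X := OrderHom.gfp (biHom R)

/-- The monotone operator `R' ↦ (←ε ∪ →ε ∪ ↓R')*`. -/
def ieqHom (R : TRS Sg X) : TRel Sg X →o TRel Sg X where
  toFun U := ReflTransGen (fun s t => RootStep R t s ∨ RootStep R s t ∨ liftRel U s t)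
  monotone' := by
    intro U V h a b hab
    exact ReflTransGen.mono
      (fun x y hxy => hxy.imp id (fun h' => h'.imp id (fun h'' => liftRel_mono h _ _ h''))) _ _ hab

/-- The infinitary equational reasoning relation `=∞ := νR.(←ε ∪ →ε ∪ ↓R)*`. -/
def ieq (R : TRS Sg X) : TRel Sg X := OrderHom.gfp (ieqHom R)

/-- `Agree n s t`: the terms `s` and `t` coincide up to depth `n`
(i.e. `d(s,t) ≤ 2^{-n}` for the standard metric `d`). -/
def Agree : ℕ → Tm Sg X → Tm Sg X → Prop
  | 0, _, _ => True
  | n + 1, s, t =>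
      (∃ x : X, s = Tm.var x ∧ t = Tm.var x) ∨
      ∃ (f : Sg.Sym) (ss ts : Fin (Sg.ar f) → Tm Sg X),
        s = Tm.node f ss ∧ t = Tm.node f ts ∧ ∀ i, Agree n (ss i) (ts i)

/-- `ConvTo t p l tl`: as `β` approaches the ordinal `l` from below,
`d(t β, tl)` tends to `0` and the depth `|p β|` tends to infinity. -/
def ConvTo (t : Ordinal.{0} → Tm Sg X) (p : Ordinal.{0} → List ℕ) (l : Ordinal.{0})
    (tl : Tm Sg X) : Prop :=
  (∀ n : ℕ, ∃ β₀ < l, ∀ β, β₀ ≤ β → β < l → Agree n (t β) tl) ∧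
  (∀ n : ℕ, ∃ β₀ < l, ∀ β, β₀ ≤ β → β < l → n ≤ (p β).length)

/-- A transfinite sequence of `Q`-steps `(t_β →_{p_β} t_{β+1})_{β<α}` of ordinal
length `α`, weakly continuous and with depths tending to infinity at every limit
ordinal `λ < α`. -/
structure TransSeq (Q : TRel Sg X) (α : Ordinal.{0}) where
  t : Ordinal.{0} → Tm Sg X
  pos : Ordinal.{0} → List ℕ
  step : ∀ β < α, StepAt Q (pos β) (t β) (t (β + 1))
  conv : ∀ l < α, Order.IsSuccLimit l → ConvTo t pos l (t l)

/-- A transfinite rewrite sequence is strongly convergent if its length is a successor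
ordinal (or zero), or there exists a final term to which it converges (with depths
tending to infinity) at the limit. -/
def TransSeq.StronglyConvergent {Q : TRel Sg X} {α : Ordinal.{0}} (s : TransSeq Q α) : Prop :=
  Order.IsSuccLimit α → ∃ tl, ConvTo s.t s.pos α tl

/-- `SCRed Q s t`: there is a strongly convergent transfinite sequence of `Q`-steps
from `s` to `t`. -/
def SCRed (Q : TRel Sg X) : TRel Sg X := fun a b =>
  ∃ (α : Ordinal.{0}) (s : TransSeq Q α), s.t 0 = a ∧ s.t α = b ∧
    (Order.IsSuccLimit α → ConvTo s.t s.pos α b)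

/-- The standard, ordinal-based infinitary rewrite relation `→∞_ord`:
strongly convergent transfinite rewrite sequences. -/
def iredOrd (R : TRS Sg X) : TRel Sg X := SCRed (RootStep R)

-- auxiliary facts about the term constructors
lemma node_ne_var (f : Sg.Sym) (args : Fin (Sg.ar f) → Tm Sg X) (x : X) :
    Tm.node f args ≠ Tm.var x := by
  intro h
  have h1 := congrArg (fun u => (PFunctor.M.dest u).1) h
  simp only [Tm.node, Tm.var, PFunctor.M.dest_mk] at h1
  exact Sum.inr_ne_inl (h1 : (Sum.inr f : X ⊕ Sg.Sym) = Sum.inl x)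

lemma node_inj_sym {f g : Sg.Sym} {ss : Fin (Sg.ar f) → Tm Sg X}
    {ts : Fin (Sg.ar g) → Tm Sg X} (h : Tm.node f ss = Tm.node g ts) : f = g := by
  have h1 := congrArg (fun u => (PFunctor.M.dest u).1) h
  simp only [Tm.node, PFunctor.M.dest_mk] at h1
  exact Sum.inr.inj h1

lemma node_inj_args {f : Sg.Sym} {ss ts : Fin (Sg.ar f) → Tm Sg X}
    (h : Tm.node f ss = Tm.node f ts) : ss = ts := by
  have h' : (PFunctor.M.mk ⟨Sum.inr f, ss⟩ : Tm Sg X) = PFunctor.M.mk ⟨Sum.inr f, ts⟩ := h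
  have h1 := PFunctor.M.mk_inj h'
  injection h1 with h2 h3

lemma var_inj {x y : X} (h : (Tm.var x : Tm Sg X) = Tm.var y) : x = y := by
  have h1 := congrArg (fun u => (PFunctor.M.dest u).1) h
  simp only [Tm.var, PFunctor.M.dest_mk] at h1
  exact Sum.inl.inj h1

lemma occurs_var_iff {x y : X} : Occurs x (Tm.var y : Tm Sg X) ↔ x = y := by
  constructor
  · intro h
    cases h with
    | here h => exact (var_inj h.symm)
    | deeper i h _ => exact absurd h.symm (node_ne_var _ _ _)
  · rintro rfl
    exact Occurs.here rfl

lemma occurs_node_iff {x : X} {f : Sg.Sym} {args : Fin (Sg.ar f) → Tm Sg X} :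
    Occurs x (Tm.node f args) ↔ ∃ i, Occurs x (args i) := by
  constructor
  · intro h
    cases h with
    | here h => exact absurd h (node_ne_var _ _ _)
    | deeper i h hocc =>
      obtain rfl := node_inj_sym h
      obtain rfl := node_inj_args h
      exact ⟨i, hocc⟩
  · rintro ⟨i, h⟩
    exact Occurs.deeper i rfl h

lemma Tm.eq_node_of_ne_var {t : Tm Sg X} (ht : ∀ x : X, t ≠ Tm.var x) :
    ∃ (f : Sg.Sym) (k : Fin (Sg.ar f) → Tm Sg X), t = Tm.node f k := by
  rw [← PFunctor.M.mk_dest t] at ht ⊢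
  generalize PFunctor.M.dest t = d at ht ⊢
  obtain ⟨a | f, k⟩ := d
  · refine absurd ?_ (ht a)
    unfold Tm.var
    congr
    exact funext fun e => (e : Empty).elim
  · exact ⟨f, k, rfl⟩

lemma corec_substAux_inr (σ : X → Tm Sg X) (u : Tm Sg X) :
    PFunctor.M.corec (substAux σ) (Sum.inr u) = u := by
  refine PFunctor.M.bisim (fun a b => a = PFunctor.M.corec (substAux σ) (Sum.inr b)) ?_ _ _ rfl
  rintro _ b rfl
  refine ⟨(PFunctor.M.dest b).1,
    fun i => PFunctor.M.corec (substAux σ) (Sum.inr ((PFunctor.M.dest b).2 i)),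
    (PFunctor.M.dest b).2, ?_, rfl, fun _ => rfl⟩
  rw [PFunctor.M.dest_corec]
  rfl

lemma subst_var (σ : X → Tm Sg X) (x : X) : subst σ (Tm.var x) = σ x := by
  rw [subst, PFunctor.M.corec_def]
  show PFunctor.M.mk ⟨(σ x).dest.1,
    fun b => PFunctor.M.corec (substAux σ) (Sum.inr ((σ x).dest.2 b))⟩ = σ x
  have hargs : (fun b => PFunctor.M.corec (substAux σ) (Sum.inr ((σ x).dest.2 b))) =
      (σ x).dest.2 := funext fun b => corec_substAux_inr σ _
  rw [hargs]
  exact PFunctor.M.mk_dest _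

lemma subst_node (σ : X → Tm Sg X) (f : Sg.Sym) (k : Fin (Sg.ar f) → Tm Sg X) :
    subst σ (Tm.node f k) = Tm.node f (fun i => subst σ (k i)) := by
  rw [subst, PFunctor.M.corec_def]
  rfl

lemma rootStep_of_collapsing {R : TRS Sg X} {l : Tm Sg X} {x : X}
    (hcollapse : (l, Tm.var x) ∈ R.rules) (σ : X → Tm Sg X) :
    RootStep R (subst σ l) (σ x) :=
  ⟨l, Tm.var x, hcollapse, σ, rfl, (subst_var σ x).symm⟩

lemma liftRel_top_subst {l : Tm Sg X} (hl : ∀ x : X, l ≠ Tm.var x) (σ τ : X → Tm Sg X) :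
    liftRel ⊤ (subst σ l) (subst τ l) := by
  obtain ⟨f, k, rfl⟩ := Tm.eq_node_of_ne_var hl
  exact Or.inr ⟨f, _, _, subst_node σ f k, subst_node τ f k, fun _ => trivial⟩

/-- `s ←ε ℓ[· ↦ s] ↓⊤ ℓ[· ↦ t] →ε t`: both instances of `ℓ` share its root symbol,
as `ℓ` is not a variable. Coinduction then turns this into `s =∞ t`. -/
lemma top_le_ieqHom_top {R : TRS Sg X} {l : Tm Sg X} {x : X}
    (hcollapse : (l, Tm.var x) ∈ R.rules) : (⊤ : TRel Sg X) ≤ ieqHom R ⊤ := by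
  intro s t _
  have hlift := liftRel_top_subst (R.lhs_not_var l _ hcollapse) (fun _ => s) (fun _ => t)
  exact ReflTransGen.head (Or.inl (rootStep_of_collapsing hcollapse _))
    (ReflTransGen.head (Or.inr (Or.inr hlift))
      (ReflTransGen.single (Or.inr (Or.inl (rootStep_of_collapsing hcollapse _)))))

theorem ieq_trivial_of_collapsing_general (Sg : Signature) (X : Type)
    (R : TRS Sg X) (l : Tm Sg X) (x : X) (hcollapse : (l, Tm.var x) ∈ R.rules) :
    ∀ s t : Tm Sg X, ieq R s t :=
  fun s t => (ieqHom R).le_gfp (top_le_ieqHom_top hcollapse) s t trivial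

/-- If a TRS `R` contains a collapsing rule `ℓ → x` (whose
right-hand side is a variable), then infinitary equational reasoning relates all
terms: `s =∞ t` for all terms `s` and `t`. -/
theorem ieq_trivial_of_collapsing (Sg : Signature) (X : Type) [Infinite X]
    (R : TRS Sg X) (l : Tm Sg X) (x : X) (hcollapse : (l, Tm.var x) ∈ R.rules) :
    ∀ s t : Tm Sg X, ieq R s t :=
  ieq_trivial_of_collapsing_general Sg X R l x hcollapse
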